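/- arXiv:1402.0340 — 5 statements merged into one kernel-verified Lean document; each statement's English description precedes it below -/
import Mathlib

section
/- Let F be a field, K a quadratic field extension of F, and G(x_1,...,x_n) a homogeneous polynomial of degree 3 with coefficients in F. If G has a nonzero solution in K^n, then G has a nonzero solution in F^n. -/
/-!
Write the `K`-point as `x = a + θ b` with `a, b` over `F` and `θ ∉ F`, and restrict the cubic
form to the line `t ↦ a + t b`: this gives `g ∈ F[t]` of degree at most `3` whose
`t³`-coefficient is `G(b)` and which vanishes at `θ`. If `G(b) = 0` then `b` (or `a`, when
`b = 0`) is already a solution. Otherwise `g` is a cubic divisible by the quadratic minimal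
polynomial of `θ`, so it has a root `t ∈ F`, and `a + t b` is a solution; it is nonzero, since
`a + t b = 0` would make `x = (θ - t) b` and hence `G(x) = (θ - t)³ G(b) ≠ 0`.
-/
open Polynomial

namespace Polynomial

theorem coeff_prod_sum_of_natDegree_le {R ι : Type*} [CommSemiring R] (s : Finset ι)
    (f : ι → R[X]) (d : ι → ℕ) (h : ∀ i ∈ s, (f i).natDegree ≤ d i) :
    (∏ i ∈ s, f i).coeff (∑ i ∈ s, d i) = ∏ i ∈ s, (f i).coeff (d i) := by
  classical
  induction s using Finset.induction with
  | empty => simp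
  | insert j s hj ih =>
    have hs : ∀ i ∈ s, (f i).natDegree ≤ d i := fun i hi => h i (Finset.mem_insert_of_mem hi)
    rw [Finset.prod_insert hj, Finset.sum_insert hj, Finset.prod_insert hj,
      coeff_mul_add_eq_of_natDegree_le (h j (Finset.mem_insert_self _ _))
        ((natDegree_prod_le _ _).trans (Finset.sum_le_sum hs)), ih hs]

theorem exists_isRoot_of_dvd_of_natDegree_eq_add_one {F : Type*} [Field F] {p q : F[X]}
    (hp : p ≠ 0) (hqp : q ∣ p) (hdeg : p.natDegree = q.natDegree + 1) : ∃ t, p.IsRoot t := by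
  obtain ⟨l, rfl⟩ := hqp
  have hl : l.natDegree = 1 := by
    rw [natDegree_mul (left_ne_zero_of_mul hp) (right_ne_zero_of_mul hp)] at hdeg
    omega
  obtain ⟨t, ht⟩ :=
    exists_root_of_degree_eq_one ((degree_eq_iff_natDegree_eq_of_pos one_pos).mpr hl)
  exact ⟨t, root_mul_left_of_isRoot q ht⟩

theorem natDegree_C_add_C_mul_X_le {R : Type*} [Semiring R] (a b : R) :
    (C a + C b * X).natDegree ≤ 1 :=
  add_comm (C a) _ ▸ natDegree_linear_le

theorem natDegree_pow_C_add_C_mul_X_le {R : Type*} [Semiring R] (a b : R) (k : ℕ) :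
    ((C a + C b * X) ^ k).natDegree ≤ k :=
  natDegree_pow_le_of_le k (natDegree_C_add_C_mul_X_le a b) |>.trans_eq (mul_one k)

end Polynomial

namespace MvPolynomial

variable {σ R : Type*} [CommSemiring R]

theorem IsHomogeneous.aeval_smul {A : Type*} [CommSemiring A] [Algebra R A]
    {φ : MvPolynomial σ R} {n : ℕ} (hφ : φ.IsHomogeneous n) (c : A) (x : σ → A) :
    MvPolynomial.aeval (c • x) φ = c ^ n * MvPolynomial.aeval x φ := by
  conv_lhs => rw [φ.as_sum]
  conv_rhs => rw [φ.as_sum]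
  simp only [map_sum, aeval_monomial, Finset.mul_sum]
  refine Finset.sum_congr rfl fun m hm => ?_
  simp only [Finsupp.prod, Pi.smul_apply, smul_eq_mul, mul_pow, Finset.prod_mul_distrib,
    Finset.prod_pow_eq_pow_sum, ← hφ.degree_eq_sum_deg_support hm]
  ring

/-- `φ` restricted to the line `t ↦ a + t • b`. -/
noncomputable def restrictLine (a b : σ → R) : MvPolynomial σ R →ₐ[R] R[X] :=
  aeval fun i => Polynomial.C (a i) + Polynomial.C (b i) * Polynomial.X

theorem aeval_restrictLine {A : Type*} [CommSemiring A] [Algebra R A] (a b : σ → R)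
    (φ : MvPolynomial σ R) (θ : A) : Polynomial.aeval θ (restrictLine a b φ) =
      aeval (fun i => algebraMap R A (a i) + algebraMap R A (b i) * θ) φ := by
  rw [restrictLine, ← AlgHom.comp_apply, comp_aeval]
  simp

theorem eval_restrictLine (a b : σ → R) (φ : MvPolynomial σ R) (t : R) :
    (restrictLine a b φ).eval t = eval (fun i => a i + b i * t) φ := by
  simpa using aeval_restrictLine a b φ t

theorem restrictLine_monomial (a b : σ → R) (m : σ →₀ ℕ) (r : R) :
    restrictLine a b (monomial m r) = Polynomial.C r *
      ∏ i ∈ m.support, (Polynomial.C (a i) + Polynomial.C (b i) * Polynomial.X) ^ m i := by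
  simp [restrictLine, aeval_monomial, Finsupp.prod, Polynomial.algebraMap_eq]

theorem natDegree_restrictLine_monomial_le (a b : σ → R) (m : σ →₀ ℕ) (r : R) :
    (restrictLine a b (monomial m r)).natDegree ≤ m.degree := by
  rw [restrictLine_monomial, Finsupp.degree_apply]
  exact (natDegree_C_mul_le _ _).trans <| (natDegree_prod_le _ _).trans <|
    Finset.sum_le_sum fun i _ => natDegree_pow_C_add_C_mul_X_le _ _ _

theorem coeff_restrictLine_monomial (a b : σ → R) (m : σ →₀ ℕ) (r : R) :
    (restrictLine a b (monomial m r)).coeff m.degree = eval b (monomial m r) := by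
  rw [restrictLine_monomial, Polynomial.coeff_C_mul, Finsupp.degree_apply, eval_monomial,
    Finsupp.prod, coeff_prod_sum_of_natDegree_le _ _ _
      fun i _ => natDegree_pow_C_add_C_mul_X_le _ _ _]
  congr 1
  refine Finset.prod_congr rfl fun i _ => ?_
  simpa using coeff_pow_of_natDegree_le (m := m i) (natDegree_C_add_C_mul_X_le (a i) (b i))

variable {φ : MvPolynomial σ R} {n : ℕ}

theorem IsHomogeneous.natDegree_restrictLine_le (hφ : φ.IsHomogeneous n) (a b : σ → R) :
    (restrictLine a b φ).natDegree ≤ n := by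
  rw [φ.as_sum, map_sum]
  refine natDegree_sum_le_of_forall_le _ _ fun m hm => ?_
  rw [hφ.degree_eq_sum_deg_support hm, ← Finsupp.degree_apply]
  exact natDegree_restrictLine_monomial_le a b m _

theorem IsHomogeneous.coeff_restrictLine (hφ : φ.IsHomogeneous n) (a b : σ → R) :
    (restrictLine a b φ).coeff n = eval b φ := by
  conv_lhs => rw [φ.as_sum]
  conv_rhs => rw [φ.as_sum]
  rw [map_sum, finsetSum_coeff, map_sum]
  refine Finset.sum_congr rfl fun m hm => ?_
  rw [hφ.degree_eq_sum_deg_support hm, ← Finsupp.degree_apply]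
  exact coeff_restrictLine_monomial a b m _

end MvPolynomial

section QuadraticExtension

variable {F K : Type*} [Field F] [Field K] [Algebra F K]

theorem exists_notMem_range_algebraMap (h : Module.finrank F K ≠ 1) :
    ∃ θ : K, θ ∉ Set.range (algebraMap F K) := by
  by_contra! hF
  exact h (Subalgebra.bot_eq_top_iff_finrank_eq_one.mp
    (eq_top_iff.mpr fun z _ => Algebra.mem_bot.mpr (hF z)))

theorem minpoly.natDegree_eq_two_of_finrank_eq_two (h2 : Module.finrank F K = 2) {θ : K}
    (hθ : θ ∉ Set.range (algebraMap F K)) : (minpoly F θ).natDegree = 2 := by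
  have : FiniteDimensional F K := Module.finite_of_finrank_eq_succ h2
  have hle := h2 ▸ minpoly.natDegree_le (A := F) θ
  have hge := (minpoly.two_le_natDegree_iff (.of_finite F θ)).mpr hθ
  omega

theorem exists_algebraMap_add_algebraMap_mul_eq (h2 : Module.finrank F K = 2) {θ : K}
    (hθ : θ ∉ Set.range (algebraMap F K)) (z : K) :
    ∃ a b : F, algebraMap F K a + algebraMap F K b * θ = z := by
  have hli : LinearIndependent F ![1, θ] :=
    (LinearIndependent.pair_iff' one_ne_zero).mpr fun a ha =>
      hθ ⟨a, by rw [Algebra.algebraMap_eq_smul_one, ha]⟩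
  have hspan := hli.span_eq_top_of_card_eq_finrank (by simp [h2])
  have hz : z ∈ Submodule.span F {1, θ} := by
    rw [show ({1, θ} : Set K) = Set.range ![1, θ] by simp [Set.pair_comm], hspan]; trivial
  obtain ⟨a, b, hab⟩ := Submodule.mem_span_pair.mp hz
  exact ⟨a, b, by rw [← hab, Algebra.smul_def, Algebra.smul_def, mul_one]⟩

open MvPolynomial in
theorem exists_ne_zero_eval_eq_zero_of_natDegree_minpoly_eq_two {σ : Type*}
    {G : MvPolynomial σ F} (hG : G.IsHomogeneous 3) {θ : K} (hθ : (minpoly F θ).natDegree = 2)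
    (a b : σ → F)
    (hx : (fun i => algebraMap F K (a i) + algebraMap F K (b i) * θ) ≠ 0)
    (hxG : aeval (fun i => algebraMap F K (a i) + algebraMap F K (b i) * θ) G = 0) :
    ∃ y : σ → F, y ≠ 0 ∧ eval y G = 0 := by
  have hθt : ∀ t : F, θ - algebraMap F K t ≠ 0 := fun t h => by
    rw [sub_eq_zero.mp h, minpoly.eq_X_sub_C, natDegree_X_sub_C] at hθ
    omega
  by_cases hb : eval b G = 0
  · by_cases hb0 : b = 0
    · subst hb0
      refine ⟨a, fun ha => hx (funext fun i => by simp [ha]), ?_⟩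
      exact (aeval_algebraMap_eq_zero_iff K a G).mp (by simpa [Function.comp_def] using hxG)
    · exact ⟨b, hb0, hb⟩
  set g := restrictLine a b G
  have hg3 : g.natDegree = 3 := le_antisymm (hG.natDegree_restrictLine_le a b)
    (le_natDegree_of_ne_zero (by rwa [hG.coeff_restrictLine]))
  have hg0 : g ≠ 0 := fun h => by simp [h] at hg3
  have hgθ : Polynomial.aeval θ g = 0 := by rwa [aeval_restrictLine]
  obtain ⟨t, ht⟩ := exists_isRoot_of_dvd_of_natDegree_eq_add_one hg0 (minpoly.dvd F θ hgθ)
    (by rw [hg3, hθ])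
  refine ⟨fun i => a i + b i * t, fun hy => hb ?_, by rwa [← eval_restrictLine]⟩
  have hxb : (fun i => algebraMap F K (a i) + algebraMap F K (b i) * θ) =
      (θ - algebraMap F K t) • (algebraMap F K ∘ b) := by
    funext i
    rw [eq_neg_of_add_eq_zero_left (congrFun hy i)]
    simp only [map_neg, map_mul, Pi.smul_apply, Function.comp_apply, smul_eq_mul]
    ring
  rwa [hxb, hG.aeval_smul, MvPolynomial.aeval_algebraMap_apply, mul_eq_zero,
    or_iff_right (pow_ne_zero 3 (hθt t)), FaithfulSMul.algebraMap_eq_zero_iff] at hxG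

end QuadraticExtension

theorem cubic_form_descends_quadratic_ext
    (F K : Type*) [Field F] [Field K] [Algebra F K]
    (h2 : Module.finrank F K = 2)
    (n : ℕ) (G : MvPolynomial (Fin n) F) (hG : G.IsHomogeneous 3)
    (x : Fin n → K) (hx : x ≠ 0) (hxsol : MvPolynomial.aeval x G = 0) :
    ∃ y : Fin n → F, y ≠ 0 ∧ MvPolynomial.eval y G = 0 := by
  obtain ⟨θ, hθ⟩ := exists_notMem_range_algebraMap (by rw [h2]; decide)
  choose a b hab using exists_algebraMap_add_algebraMap_mul_eq h2 hθ
  have hx_eq : x = fun i => algebraMap F K (a (x i)) + algebraMap F K (b (x i)) * θ :=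
    funext fun i => (hab (x i)).symm
  rw [hx_eq] at hx hxsol
  exact exists_ne_zero_eval_eq_zero_of_natDegree_minpoly_eq_two hG
    (minpoly.natDegree_eq_two_of_finrank_eq_two h2 hθ) (a ∘ x) (b ∘ x) hx hxsol
end

section
/- Let t be an n×n matrix over a field of characteristic zero, with n odd, such that the trace of t^i is zero for every odd i with 0 < i < n. Then in the characteristic polynomial charpoly(t) = X^n + Σ_{i=1}^n c_i X^{n−i}, the coefficient c_i vanishes for every odd i with 0 < i < n. -/
/-!
Pass to an algebraic closure, where the trace of `t ^ j` is the power sum `p_j` of the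
eigenvalues (summing over generalized eigenspaces, on each of which `t` is a scalar plus a
nilpotent) and `c_i = (-1) ^ i e_i` by Vieta. In Newton's identity
`i e_i = ± ∑_{a + b = i, a < i} ± e_a p_b` with `i` odd, one of `a`, `b` is odd in every term, so,
dividing by `i` in characteristic zero, strong induction on `i` kills every odd `e_i` with `i < n`.
-/

open Polynomial Module Finset

theorem LinearMap.trace_pow_eq_finrank_mul_of_isNilpotent_sub_algebraMap {R M : Type*}
    [CommRing R] [IsReduced R] [AddCommGroup M] [Module R M] [Module.Free R M] [Module.Finite R M]
    {g : End R M} {μ : R} (hg : IsNilpotent (g - algebraMap R (End R M) μ)) (k : ℕ) :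
    trace R M (g ^ k) = finrank R M * μ ^ k := by
  induction k with
  | zero => simp
  | succ k ih =>
    rw [pow_succ, End.mul_eq_comp,
      trace_comp_eq_mul_of_commute_of_isNilpotent μ ((Commute.refl g).pow_left k) hg, ih]
    ring

theorem Module.End.trace_pow_eq_sum_map_pow_roots_charpoly {K V : Type*} [Field K] [IsAlgClosed K]
    [AddCommGroup V] [Module K V] [FiniteDimensional K V] (f : End K V) (k : ℕ) :
    LinearMap.trace K V (f ^ k) = (f.charpoly.roots.map (· ^ k)).sum := by
  classical
  have hinternal := DirectSum.isInternal_submodule_of_iSupIndep_of_iSup_eq_top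
    f.independent_maxGenEigenspace f.iSup_maxGenEigenspace_eq_top
  have hfin : {μ | f.maxGenEigenspace μ ≠ ⊥}.Finite :=
    WellFoundedGT.finite_ne_bot_of_iSupIndep f.independent_maxGenEigenspace
  have hmaps (μ : K) := f.mapsTo_maxGenEigenspace_of_comm ((Commute.refl f).pow_right k) μ
  have hcount (μ : K) : finrank K (f.maxGenEigenspace μ) = f.charpoly.roots.count μ := by
    rw [LinearMap.finrank_maxGenEigenspace_eq, count_roots]
  have hsupport : hfin.toFinset = f.charpoly.roots.toFinset := by
    ext μ
    simp only [Set.Finite.mem_toFinset, Set.mem_ofPred_eq, ne_eq, ← Submodule.finrank_eq_zero,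
      hcount, Multiset.count_eq_zero, not_not, Multiset.mem_toFinset]
  have hblock (μ : K) : LinearMap.trace K _ ((f ^ k).restrict (hmaps μ)) =
      f.charpoly.roots.count μ • μ ^ k := by
    have hf := f.mapsTo_maxGenEigenspace_of_comm (Commute.refl f) μ
    have hnil : IsNilpotent (f.restrict hf - algebraMap K (End K (f.maxGenEigenspace μ)) μ) := by
      convert f.isNilpotent_restrict_maxGenEigenspace_sub_algebraMap μ
      ext x
      rfl
    rw [← End.pow_restrict k hf,
      LinearMap.trace_pow_eq_finrank_mul_of_isNilpotent_sub_algebraMap hnil, hcount, nsmul_eq_mul]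
  rw [LinearMap.trace_eq_sum_trace_restrict' hinternal hfin hmaps, hsupport,
    Finset.sum_multiset_map_count]
  exact Finset.sum_congr rfl fun μ _ => hblock μ

theorem Matrix.trace_pow_eq_sum_map_pow_roots_charpoly {K ι : Type*} [Field K] [IsAlgClosed K]
    [Fintype ι] [DecidableEq ι] (M : Matrix ι ι K) (k : ℕ) :
    (M ^ k).trace = (M.charpoly.roots.map (· ^ k)).sum := by
  rw [← trace_toLin'_eq, ← charpoly_toLin', toLin'_pow]
  exact End.trace_pow_eq_sum_map_pow_roots_charpoly _ k

theorem Matrix.coeff_charpoly_eq_esymm_roots {K ι : Type*} [Field K] [Fintype ι] [DecidableEq ι]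
    (M : Matrix ι ι K) (hM : M.charpoly.Splits) {i : ℕ} (hi : i ≤ Fintype.card ι) :
    M.charpoly.coeff (Fintype.card ι - i) = (-1) ^ i * M.charpoly.roots.esymm i := by
  rw [coeff_eq_esymm_roots_of_splits hM (by rw [charpoly_natDegree_eq_dim]; omega),
    M.charpoly_monic.leadingCoeff, charpoly_natDegree_eq_dim, Nat.sub_sub_self hi, one_mul]

theorem Multiset.mul_esymm_eq_sum {R : Type*} [CommRing R] (s : Multiset R) (k : ℕ) :
    k * s.esymm k = (-1) ^ (k + 1) *
      ∑ a ∈ HasAntidiagonal.antidiagonal k with a.1 < k,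
        (-1) ^ a.1 * s.esymm a.1 * (s.map (· ^ a.2)).sum := by
  classical
  have hesymm (j : ℕ) :
      MvPolynomial.aeval (fun x : s => (x : R)) (MvPolynomial.esymm s R j) = s.esymm j := by
    rw [MvPolynomial.aeval_esymm_eq_multiset_esymm, map_univ_coe]
  have hpsum (j : ℕ) :
      MvPolynomial.aeval (fun x : s => (x : R)) (MvPolynomial.psum s R j) = (s.map (· ^ j)).sum := by
    rw [MvPolynomial.psum, map_sum, Finset.sum_eq_multiset_sum]
    simp only [map_pow, MvPolynomial.aeval_X]
    exact congrArg sum (map_univ s (· ^ j))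
  simpa only [map_mul, map_natCast, map_pow, map_neg, map_one, map_sum, hesymm, hpsum] using
    congrArg (MvPolynomial.aeval (fun x : s => (x : R))) (MvPolynomial.mul_esymm_eq_sum s R k)

theorem Multiset.esymm_eq_zero_of_sum_map_pow_eq_zero_of_odd {R : Type*} [CommRing R] [IsDomain R]
    [CharZero R] {s : Multiset R} {N : ℕ}
    (hpow : ∀ j, Odd j → j < N → (s.map (· ^ j)).sum = 0) {k : ℕ} (hk : Odd k) (hkN : k < N) :
    s.esymm k = 0 := by
  induction k using Nat.strong_induction_on with
  | _ k ih =>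
  have hterm : ∀ a ∈ (HasAntidiagonal.antidiagonal k).filter (·.1 < k),
      (-1 : R) ^ a.1 * s.esymm a.1 * (s.map (· ^ a.2)).sum = 0 := by
    rintro ⟨i, j⟩ hij
    simp only [Finset.mem_filter, Finset.HasAntidiagonal.mem_antidiagonal] at hij
    obtain ⟨rfl, hi⟩ := hij
    rcases Nat.even_or_odd j with hj | hj
    · rw [ih i hi ((Nat.odd_add.mp hk).mpr hj) (by omega), mul_zero, zero_mul]
    · rw [hpow j hj (by omega), mul_zero]
  have h := s.mul_esymm_eq_sum k
  rw [Finset.sum_eq_zero hterm, mul_zero, mul_eq_zero] at h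
  exact h.resolve_left (Nat.cast_ne_zero.mpr hk.pos.ne')

theorem odd_charpoly_coeffs_vanish_of_odd_power_traces_general
    (F : Type*) [Field F] [CharZero F] (n : ℕ)
    (t : Matrix (Fin n) (Fin n) F)
    (htr : ∀ i : ℕ, Odd i → 0 < i → i < n → (t ^ i).trace = 0) :
    ∀ i : ℕ, Odd i → 0 < i → i < n → (Matrix.charpoly t).coeff (n - i) = 0 := by
  intro i hi _ hin
  let M := t.map (algebraMap F (AlgebraicClosure F))
  have hpow : ∀ j, Odd j → j < n → (M.charpoly.roots.map (· ^ j)).sum = 0 := by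
    intro j hj hjn
    rw [← M.trace_pow_eq_sum_map_pow_roots_charpoly, ← Matrix.map_pow, ← AddMonoidHom.map_trace,
      htr j hj hj.pos hjn, map_zero]
  have hcoeff := M.coeff_charpoly_eq_esymm_roots (IsAlgClosed.splits _) (i := i)
    (by rw [Fintype.card_fin]; omega)
  rwa [Fintype.card_fin, Multiset.esymm_eq_zero_of_sum_map_pow_eq_zero_of_odd hpow hi hin,
    mul_zero, Matrix.charpoly_map, coeff_map, map_eq_zero] at hcoeff

theorem odd_charpoly_coeffs_vanish_of_odd_power_traces
    (F : Type*) [Field F] [CharZero F] (n : ℕ) (hn : Odd n)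
    (t : Matrix (Fin n) (Fin n) F)
    (htr : ∀ i : ℕ, Odd i → 0 < i → i < n → (t ^ i).trace = 0) :
    ∀ i : ℕ, Odd i → 0 < i → i < n → (Matrix.charpoly t).coeff (n - i) = 0 :=
  odd_charpoly_coeffs_vanish_of_odd_power_traces_general F n t htr
end

section
/- Let n be odd and A an invertible n×n matrix over a field, with characteristic polynomial X^n + Σ_{i=1}^n c_i X^{n−i}. If c_i = 0 for every odd i with 0 < i < n, then the characteristic polynomial of A⁻¹, written X^n + Σ_{i=1}^n d_i X^{n−i}, has d_i = 0 for every even i with 0 < i < n. -/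
open Polynomial Matrix

theorem even_coeffs_of_inverse_vanish
    (F : Type*) [Field F] (n : ℕ) (hn : Odd n)
    (A : Matrix (Fin n) (Fin n) F) (hA : IsUnit A.det)
    (hodd : ∀ i : ℕ, Odd i → 0 < i → i < n → (Matrix.charpoly A).coeff (n - i) = 0) :
    ∀ i : ℕ, Even i → 0 < i → i < n → (Matrix.charpoly A⁻¹).coeff (n - i) = 0 := by
  have hmul : (A.map C) * (charmatrix A⁻¹) = (X : F[X]) • A.map C - 1 := by
    rw [charmatrix, Matrix.mul_sub]
    congr 1
    · rw [← (Matrix.scalar_commute (X : F[X]) (fun r' => Commute.all _ _) (A.map C)).eq,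
        Matrix.scalar_apply, ← Matrix.smul_eq_diagonal_mul]
    · have h1 : (A * A⁻¹) = 1 := Matrix.mul_nonsing_inv A hA
      rw [show (C : F →+* F[X]).mapMatrix A⁻¹ = A⁻¹.map C from rfl,
        ← Matrix.map_mul, h1]
      simp
  have hdet : (C A.det) * (A⁻¹).charpoly = (-1 : F[X]) ^ n * A.charpolyRev := by
    have h2 := congrArg Matrix.det hmul
    rw [Matrix.det_mul] at h2
    have h3 : (A.map ⇑(C : F →+* F[X])).det = C A.det := (RingHom.map_det C A).symm
    rw [h3] at h2
    rw [show (A⁻¹).charpoly = (charmatrix A⁻¹).det from rfl, h2, charpolyRev, show ((X : F[X]) • A.map ⇑C - 1)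
      = -(1 - (X : F[X]) • A.map ⇑C) by rw [neg_sub], Matrix.det_neg]
    simp
  intro i hi hi0 hin
  have key := congrArg (fun p => p.coeff (n - i)) hdet
  have hsgn : ((-1 : F[X]) ^ n) = C ((-1 : F) ^ n) := by simp
  simp only [hsgn, coeff_C_mul] at key
  have hni : Odd (n - i) := Nat.Odd.sub_even hin.le hn hi
  have hrev : A.charpolyRev.coeff (n - i) = 0 := by
    rw [← Matrix.reverse_charpoly, coeff_reverse,
      Matrix.charpoly_natDegree_eq_dim, Fintype.card_fin,
      revAt_le (Nat.sub_le n i)]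
    exact hodd (n - i) hni (by omega) (by omega)
  rw [hrev, mul_zero] at key
  exact (mul_eq_zero.mp key).resolve_left hA.ne_zero
end

section
/- Let A be an associative unital algebra, τ : A → A a ring automorphism, E ⊆ A a subring with τ(E) = E, and β a unit of A such that β⁻¹xβ = σ(x) for all x ∈ E, where σ is an automorphism of E of finite odd order n. Suppose that β and τ(β) commute and that τ(β)⁻¹xτ(β) = σ⁻¹(x) for all x ∈ E. Then, setting r = (n+1)/2 and β′ = β^r τ(β)^{−r}, we have τ(β′) = β′⁻¹ and β′⁻¹ x β′ = σ(x) for all x ∈ E. -/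
theorem normalized_beta_exists
    (A : Type*) [Ring A] (τ : A ≃+* A) (hτ2 : ∀ x, τ (τ x) = x)
    (E : Subring A) (hE : E.map (τ : A →+* A) = E)
    (n : ℕ) (hn : Odd n) (hn1 : 0 < n)
    (σ : E ≃+* E) (hσn : σ ^ n = 1)
    (β γ : Aˣ) (hγ : (γ : A) = τ (β : A))
    (hβ : ∀ x : E, ((β⁻¹ : Aˣ) : A) * x * β = σ x)
    (hcomm : β * γ = γ * β)
    (hτβ : ∀ x : E, ((γ⁻¹ : Aˣ) : A) * x * γ = (σ⁻¹ x : E))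
    (r : ℕ) (hr : r = (n + 1) / 2)
    (β' : Aˣ) (hβ' : β' = β ^ r * γ⁻¹ ^ r) :
    τ (β' : A) = ((β'⁻¹ : Aˣ) : A) ∧
      ∀ x : E, ((β'⁻¹ : Aˣ) : A) * x * β' = σ x := by
  -- the automorphism τ at the level of units
  set u : Aˣ →* Aˣ := Units.map ((τ : A ≃+* A) : A →+* A).toMonoidHom with hu
  have hucoe : ∀ v : Aˣ, ((u v : Aˣ) : A) = τ (v : A) := fun v => rfl
  have huβ : u β = γ := by
    ext; rw [hucoe]; exact hγ.symm
  have huγ : u γ = β := by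
    ext; rw [hucoe, hγ, hτ2]
  have hinv : β'⁻¹ = γ ^ r * β⁻¹ ^ r := by
    rw [hβ', mul_inv_rev, ← inv_pow, ← inv_pow, inv_inv, inv_pow β]
  have part1 : τ (β' : A) = ((β'⁻¹ : Aˣ) : A) := by
    rw [← hucoe, hinv]
    congr 1
    rw [hβ', map_mul, map_pow, map_pow, huβ, map_inv, huγ, inv_pow]
  refine ⟨part1, ?_⟩
  -- work with plain ring elements
  set b : A := (β : A) with hb
  set bi : A := ((β⁻¹ : Aˣ) : A) with hbi
  set g : A := (γ : A) with hg
  set gi : A := ((γ⁻¹ : Aˣ) : A) with hgi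
  have hggi : g * gi = 1 := Units.mul_inv γ
  have hgig : gi * g = 1 := Units.inv_mul γ
  -- conjugation by β^k gives σ^k
  have hone : ∀ x : E, (((1 : E ≃+* E) x : E) : A) = (x : A) := fun x => rfl
  have hβk : ∀ (k : ℕ) (x : E), bi ^ k * x * b ^ k = ((σ ^ k) x : E) := by
    intro k
    induction k with
    | zero => intro x; simp [hone]
    | succ k ih =>
      intro x
      have key : bi ^ (k + 1) * x * b ^ (k + 1)
          = bi * (bi ^ k * x * b ^ k) * b := by
        rw [pow_succ' bi, pow_succ b]; simp only [mul_assoc]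
      rw [key, ih x]
      have : bi * ((σ ^ k) x : E) * b = (σ ((σ ^ k) x) : E) := hβ _
      rw [this]
      congr 1
      rw [pow_succ']
      rfl
  -- conjugation: γ * x * γ⁻¹ = σ x
  have hγ1 : ∀ x : E, g * x * gi = (σ x : E) := by
    intro x
    have h := hτβ (σ x)
    have h2 : ((σ⁻¹ (σ x) : E) : A) = (x : A) := by
      congr 1
      exact σ.symm_apply_apply x
    rw [h2] at h
    calc g * (x : A) * gi
        = g * (gi * (σ x : E) * g) * gi := by rw [h]
      _ = (g * gi) * (σ x : E) * (g * gi) := by simp only [mul_assoc]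
      _ = (σ x : E) := by rw [hggi]; simp
  have hγk : ∀ (k : ℕ) (x : E), g ^ k * x * gi ^ k = ((σ ^ k) x : E) := by
    intro k
    induction k with
    | zero => intro x; simp [hone]
    | succ k ih =>
      intro x
      have key : g ^ (k + 1) * x * gi ^ (k + 1)
          = g * (g ^ k * x * gi ^ k) * gi := by
        rw [pow_succ' g, pow_succ gi]; simp only [mul_assoc]
      rw [key, ih x, hγ1]
      congr 1
      rw [pow_succ']
      rfl
  intro x
  have hσ2r : σ ^ (r + r) = σ := by
    obtain ⟨m, hm⟩ := hn
    have : r + r = n + 1 := by omega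
    rw [this, pow_succ, hσn, one_mul]
  have hcoe1 : ((β'⁻¹ : Aˣ) : A) = g ^ r * bi ^ r := by
    rw [hinv, Units.val_mul, Units.val_pow_eq_pow_val, Units.val_pow_eq_pow_val]
  have hcoe2 : ((β' : Aˣ) : A) = b ^ r * gi ^ r := by
    rw [hβ', Units.val_mul, Units.val_pow_eq_pow_val, Units.val_pow_eq_pow_val]
  rw [hcoe1, hcoe2]
  calc g ^ r * bi ^ r * (x : A) * (b ^ r * gi ^ r)
      = g ^ r * (bi ^ r * x * b ^ r) * gi ^ r := by simp only [mul_assoc]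
    _ = g ^ r * ((σ ^ r) x : E) * gi ^ r := by rw [hβk r x]
    _ = (((σ ^ r) ((σ ^ r) x) : E) : A) := hγk r _
    _ = (((σ ^ (r + r)) x : E) : A) := by rw [pow_add]; rfl
    _ = (σ x : E) := by rw [hσ2r]
end

section
/- Let k be a field and K = k(a, b, η) a purely transcendental extension in three variables. The k-algebra endomorphism τ of K determined by τ(a) = a⁻¹, τ(b) = η⁵b⁻², τ(η) = η²b⁻¹ is a well-defined field automorphism satisfying τ²(a) = a, τ²(b) = b⁻¹, τ²(η) = η⁻¹, and τ⁴ = id. -/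
/-!
The prescribed images `y = (a⁻¹, η⁵b⁻², η²b⁻¹)` form a Laurent-monomial substitution whose exponent
matrix `[[-1,0,0],[0,-2,5],[0,-1,2]]` has determinant `-1`, so `a, b, η` are Laurent monomials in
`y` and `y` generates `K` as a field. As `K` has transcendence degree `3` over `k`, three field
generators form a transcendence basis, so `y` is algebraically independent and `X i ↦ y i` extends
to an automorphism of the rational function field. The relations for `τ²` are a direct computation,
and `τ⁴` fixes the generators `a, b, η`, hence is the identity.
-/

open Set MvPolynomial

section

variable {F E ι : Type*} [Field F] [Field E] [Algebra F E]

theorem IntermediateField.adjoin_eq_top_of_subset_adjoin {s t : Set E}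
    (hs : IntermediateField.adjoin F s = ⊤) (hst : s ⊆ IntermediateField.adjoin F t) :
    IntermediateField.adjoin F t = ⊤ :=
  top_le_iff.mp (hs ▸ IntermediateField.adjoin_le_iff.mpr hst)

theorem Algebra.isAlgebraic_adjoin_of_intermediateField_adjoin_eq_top {s : Set E}
    (hs : IntermediateField.adjoin F s = ⊤) : Algebra.IsAlgebraic (Algebra.adjoin F s) E :=
  IntermediateField.isAlgebraic_adjoin_iff_top.mp
    ⟨fun z ↦ isAlgebraic_algebraMap
      (⟨z, hs ▸ IntermediateField.mem_top⟩ : IntermediateField.adjoin F s)⟩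

theorem IsTranscendenceBasis.of_adjoin_range_eq_top [Finite ι] {x y : ι → E}
    (hx : IsTranscendenceBasis F x) (hy : IntermediateField.adjoin F (range y) = ⊤) :
    IsTranscendenceBasis F y :=
  have := Algebra.isAlgebraic_adjoin_of_intermediateField_adjoin_eq_top hy
  Algebra.IsAlgebraic.isTranscendenceBasis_of_lift_le_trdeg_of_finite F y
    hx.lift_cardinalMk_eq_trdeg.le

namespace AlgebraicIndependent

variable {x : ι → E}

noncomputable def aevalEquivFieldOfAdjoinEqTop (hx : AlgebraicIndependent F x)
    (htop : IntermediateField.adjoin F (range x) = ⊤) :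
    FractionRing (MvPolynomial ι F) ≃ₐ[F] E :=
  hx.aevalEquivField.trans ((IntermediateField.equivOfEq htop).trans IntermediateField.topEquiv)

theorem aevalEquivFieldOfAdjoinEqTop_algebraMap_X (hx : AlgebraicIndependent F x)
    (htop : IntermediateField.adjoin F (range x) = ⊤) (i : ι) :
    hx.aevalEquivFieldOfAdjoinEqTop htop
      (algebraMap (MvPolynomial ι F) (FractionRing (MvPolynomial ι F)) (X i)) = x i := by
  simp [aevalEquivFieldOfAdjoinEqTop]

theorem exists_algEquiv_apply_eq [Finite ι] {y : ι → E} (hx : AlgebraicIndependent F x)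
    (hxtop : IntermediateField.adjoin F (range x) = ⊤)
    (hytop : IntermediateField.adjoin F (range y) = ⊤) :
    ∃ τ : E ≃ₐ[F] E, ∀ i, τ (x i) = y i := by
  have hxb : IsTranscendenceBasis F x := hx.isTranscendenceBasis_iff_isAlgebraic.mpr
    (Algebra.isAlgebraic_adjoin_of_intermediateField_adjoin_eq_top hxtop)
  have hy : AlgebraicIndependent F y := (hxb.of_adjoin_range_eq_top hytop).1
  refine ⟨(hx.aevalEquivFieldOfAdjoinEqTop hxtop).symm.trans
    (hy.aevalEquivFieldOfAdjoinEqTop hytop), fun i ↦ ?_⟩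
  rw [AlgEquiv.trans_apply, ← hx.aevalEquivFieldOfAdjoinEqTop_algebraMap_X hxtop,
    AlgEquiv.symm_apply_apply, aevalEquivFieldOfAdjoinEqTop_algebraMap_X]

end AlgebraicIndependent

end

section

variable {k ι : Type*} [Field k]

theorem MvPolynomial.algebraicIndependent_algebraMap_X :
    AlgebraicIndependent k
      (fun i ↦ algebraMap (MvPolynomial ι k) (FractionRing (MvPolynomial ι k)) (X i)) :=
  (algebraicIndependent_X ι k).map' (f := IsScalarTower.toAlgHom k _ _)
    (IsFractionRing.injective _ _)

theorem MvPolynomial.adjoin_range_algebraMap_X :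
    IntermediateField.adjoin k
      (range fun i ↦ algebraMap (MvPolynomial ι k) (FractionRing (MvPolynomial ι k)) (X i)) =
      ⊤ := by
  rw [← IsFractionRing.algHom_fieldRange_eq_of_comp_eq_of_range_eq (A := MvPolynomial ι k)
    (f := AlgHom.id k _) (g := IsScalarTower.toAlgHom k _ _) rfl]
  · exact AlgHom.fieldRange_eq_top.mpr Function.surjective_id
  · rw [← Algebra.map_top, ← adjoin_range_X, AlgHom.map_adjoin, ← range_comp]
    rfl

theorem MvPolynomial.fractionRing_algHom_ext {L : Type*} [Semiring L] [Algebra k L]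
    {f g : FractionRing (MvPolynomial ι k) →ₐ[k] L}
    (h : ∀ i, f (algebraMap (MvPolynomial ι k) (FractionRing (MvPolynomial ι k)) (X i)) =
      g (algebraMap (MvPolynomial ι k) (FractionRing (MvPolynomial ι k)) (X i))) : f = g :=
  IsLocalization.algHom_ext (nonZeroDivisors _) (MvPolynomial.algHom_ext h)

end

theorem adjoin_range_tau_eq_top {F K : Type*} [Field F] [Field K] [Algebra F K] {a b η : K}
    (hb : b ≠ 0) (hη : η ≠ 0) (habη : IntermediateField.adjoin F (range ![a, b, η]) = ⊤) :
    IntermediateField.adjoin F (range ![a⁻¹, η ^ 5 * (b ^ 2)⁻¹, η ^ 2 * b⁻¹]) = ⊤ := by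
  refine IntermediateField.adjoin_eq_top_of_subset_adjoin habη (range_subset_iff.mpr fun i ↦ ?_)
  set S := IntermediateField.adjoin F (range ![a⁻¹, η ^ 5 * (b ^ 2)⁻¹, η ^ 2 * b⁻¹])
  have hmem : ∀ j, ![a⁻¹, η ^ 5 * (b ^ 2)⁻¹, η ^ 2 * b⁻¹] j ∈ S :=
    fun j ↦ IntermediateField.subset_adjoin F _ (mem_range_self j)
  clear_value S
  fin_cases i
  · simpa using inv_mem (hmem 0)
  · have hb' : (η ^ 5 * (b ^ 2)⁻¹) ^ 2 / (η ^ 2 * b⁻¹) ^ 5 = b := by field_simp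
    show b ∈ S
    rw [← hb']
    exact div_mem (pow_mem (hmem 1) 2) (pow_mem (hmem 2) 5)
  · have hη' : η ^ 5 * (b ^ 2)⁻¹ / (η ^ 2 * b⁻¹) ^ 2 = η := by field_simp
    show η ∈ S
    rw [← hη']
    exact div_mem (hmem 1) (pow_mem (hmem 2) 2)

theorem generic_tau_automorphism (k : Type*) [Field k] :
    let K := FractionRing (MvPolynomial (Fin 3) k)
    let a : K := algebraMap (MvPolynomial (Fin 3) k) K (MvPolynomial.X 0)
    let b : K := algebraMap (MvPolynomial (Fin 3) k) K (MvPolynomial.X 1)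
    let η : K := algebraMap (MvPolynomial (Fin 3) k) K (MvPolynomial.X 2)
    ∃ τ : K ≃ₐ[k] K,
      τ a = a⁻¹ ∧ τ b = η ^ 5 * (b ^ 2)⁻¹ ∧ τ η = η ^ 2 * b⁻¹ ∧
      τ (τ a) = a ∧ τ (τ b) = b⁻¹ ∧ τ (τ η) = η⁻¹ ∧
      τ ^ 4 = 1 := by
  intro K a b η
  have hX : ![a, b, η] = fun i ↦ algebraMap (MvPolynomial (Fin 3) k) K (X i) := by
    ext i; fin_cases i <;> rfl
  have hb0 : b ≠ 0 := (map_ne_zero_iff _ (IsFractionRing.injective _ _)).mpr (X_ne_zero 1)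
  have hη0 : η ≠ 0 := (map_ne_zero_iff _ (IsFractionRing.injective _ _)).mpr (X_ne_zero 2)
  obtain ⟨τ, hτ⟩ :=
    (algebraicIndependent_algebraMap_X (ι := Fin 3) (k := k)).exists_algEquiv_apply_eq
      adjoin_range_algebraMap_X (adjoin_range_tau_eq_top hb0 hη0 (hX ▸ adjoin_range_algebraMap_X))
  have ha : τ a = a⁻¹ := hτ 0
  have hb : τ b = η ^ 5 * (b ^ 2)⁻¹ := hτ 1
  have hη : τ η = η ^ 2 * b⁻¹ := hτ 2
  have ha2 : τ (τ a) = a := by rw [ha, map_inv₀, ha, inv_inv]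
  have hb2 : τ (τ b) = b⁻¹ := by
    rw [hb, map_mul, map_pow, map_inv₀, map_pow, hb, hη]
    field_simp
  have hη2 : τ (τ η) = η⁻¹ := by
    rw [hη, map_mul, map_pow, map_inv₀, hb, hη]
    field_simp
  refine ⟨τ, ha, hb, hη, ha2, hb2, hη2, AlgEquiv.coe_toAlgHom_injective ?_⟩
  refine fractionRing_algHom_ext fun i ↦ ?_
  have hτ4 : ∀ z, (τ ^ 4) z = τ (τ (τ (τ z))) := fun z ↦ rfl
  fin_cases i
  · exact (hτ4 a).trans (by rw [ha2, ha2]; rfl)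
  · exact (hτ4 b).trans (by rw [hb2, map_inv₀, map_inv₀, hb2, inv_inv]; rfl)
  · exact (hτ4 η).trans (by rw [hη2, map_inv₀, map_inv₀, hη2, inv_inv]; rfl)
end
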